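/- Let d = 2. For every ε > 0 there exists a constant C = C(ε) such that, for all integers a_1, a_2 with 0 < |a_1| ≤ |a_2| and all reals M, H ≥ 1, one has N_{(a_1, −a_1, a_2, −a_2)}(M, H) ≤ C·M^ε·(M²H/|a_2| + MH/|a_1| + M²). -/

import Mathlib

/-!
Write the count as the number of pairs `(p, q)` of points of `([M, 2M] ∩ ℤ)²` with
`|a₁ Q(p) + a₂ Q(q)| ≤ H`, where `Q(u, v) = u² - v²`. A nonzero `m` has at most `τ(|m|) ≪ M^ε`
representations `m = u² - v²` with `u, v > 0`, because `u + v` divides `m` and then determines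
`u - v`. If `q` is diagonal then `Q(q) = 0`, so `|Q(p)| ≤ H/|a₁|`: there are at most `M` diagonal
such `p` and `≪ M^ε (H/|a₁| + 1)` others, each with `≪ M` choices of `q`. Otherwise, for each of
the `≪ M²` points `p`, the value `Q(q)` lies in an interval of length `2H/|a₂|`, which leaves
`≪ M^ε (H/|a₂| + 1)` choices of `q`.
-/

/-- The number of `x ∈ ℤ⁴` with `M ≤ x_j ≤ 2M` and
`|a_1(x_1² − x_2²) + a_2(x_3² − x_4²)| ≤ H`, i.e. `N_{(a₁,−a₁,a₂,−a₂)}(M,H)` for `d = 2`. -/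
noncomputable def NcountPairSq (a₁ a₂ : ℤ) (M H : ℝ) : ℕ :=
  Set.ncard {x : Fin 4 → ℤ | (∀ i, M ≤ (x i : ℝ) ∧ (x i : ℝ) ≤ 2 * M) ∧
    |(a₁ : ℝ) * ((x 0 : ℝ) ^ 2 - (x 1 : ℝ) ^ 2)
      + (a₂ : ℝ) * ((x 2 : ℝ) ^ 2 - (x 3 : ℝ) ^ 2)| ≤ H}

open Finset Real

namespace Nat

lemma cast_add_one_le_mul_pow {x : ℝ} (hx : 1 < x) (k : ℕ) :
    (k + 1 : ℝ) ≤ (1 + (x - 1)⁻¹) * x ^ k := by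
  have hx₁ : 0 < x - 1 := by linarith
  have bernoulli : 1 + k * (x - 1) ≤ x ^ k := by
    simpa using one_add_mul_le_pow (a := x - 1) (by linarith) k
  have expand : (1 + (x - 1)⁻¹) * (1 + k * (x - 1)) = k + 1 + (k * (x - 1) + (x - 1)⁻¹) := by
    field_simp
    ring
  calc (k + 1 : ℝ) ≤ (1 + (x - 1)⁻¹) * (1 + k * (x - 1)) := by
        rw [expand]; exact le_add_of_nonneg_right (by positivity)
    _ ≤ (1 + (x - 1)⁻¹) * x ^ k := by gcongr

lemma cast_add_one_le_mul_rpow {δ : ℝ} (hδ : 0 < δ) {p : ℕ} (hp : 2 ≤ p) (k : ℕ) :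
    (k + 1 : ℝ) ≤ (if 2 ≤ (p : ℝ) ^ δ then 1 else 1 + (2 ^ δ - 1)⁻¹) * ((p : ℝ) ^ k) ^ δ := by
  have hp' : (2 : ℝ) ≤ p := by exact_mod_cast hp
  rw [← rpow_pow_comm (by positivity)]
  split_ifs with hbig
  · calc (k + 1 : ℝ) ≤ 2 ^ k := by exact_mod_cast Nat.lt_two_pow_self
      _ ≤ ((p : ℝ) ^ δ) ^ k := by gcongr
      _ = 1 * ((p : ℝ) ^ δ) ^ k := (one_mul _).symm
  · calc (k + 1 : ℝ) ≤ (1 + (2 ^ δ - 1)⁻¹) * ((2 : ℝ) ^ δ) ^ k :=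
          cast_add_one_le_mul_pow (one_lt_rpow (by norm_num) hδ) k
      _ ≤ (1 + (2 ^ δ - 1)⁻¹) * ((p : ℝ) ^ δ) ^ k := by
          have : 1 < (2 : ℝ) ^ δ := one_lt_rpow (by norm_num) hδ
          gcongr

theorem exists_card_divisors_le_mul_rpow {δ : ℝ} (hδ : 0 < δ) :
    ∃ C : ℝ, 1 ≤ C ∧ ∀ n : ℕ, (#n.divisors : ℝ) ≤ C * (n : ℝ) ^ δ := by
  set K : ℝ := 1 + (2 ^ δ - 1)⁻¹
  have hK : 1 ≤ K := le_add_of_nonneg_right (inv_nonneg.2 (by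
    linarith [one_le_rpow (x := (2 : ℝ)) (by norm_num) hδ.le]))
  set B : ℕ := ⌈(2 : ℝ) ^ δ⁻¹⌉₊
  refine ⟨K ^ B, one_le_pow₀ hK, fun n => ?_⟩
  rcases eq_or_ne n 0 with rfl | hn
  · simp [zero_rpow hδ.ne']
  -- the primes with `p ^ δ < 2` lie below `B`, and only they cost a factor `K`
  have hsmall : #(n.primeFactors.filter fun p : ℕ => ¬ 2 ≤ (p : ℝ) ^ δ) ≤ B := by
    refine (card_le_card fun p hp => mem_range.2 ?_).trans_eq (card_range B)
    by_contra! hBp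
    refine (mem_filter.1 hp).2 ?_
    calc (2 : ℝ) = ((2 : ℝ) ^ δ⁻¹) ^ δ := (rpow_inv_rpow (by norm_num) hδ.ne').symm
      _ ≤ (p : ℝ) ^ δ := by gcongr; exact (Nat.le_ceil _).trans (by exact_mod_cast hBp)
  calc (#n.divisors : ℝ) = ∏ p ∈ n.primeFactors, ((n.factorization p : ℝ) + 1) := by
        rw [card_divisors hn]; push_cast; rfl
    _ ≤ ∏ p ∈ n.primeFactors,
          (if 2 ≤ (p : ℝ) ^ δ then 1 else K) * ((p : ℝ) ^ n.factorization p) ^ δ :=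
        prod_le_prod (fun _ _ => by positivity) fun p hp =>
          cast_add_one_le_mul_rpow hδ (prime_of_mem_primeFactors hp).two_le _
    _ = K ^ #(n.primeFactors.filter fun p : ℕ => ¬ 2 ≤ (p : ℝ) ^ δ) * (n : ℝ) ^ δ := by
        rw [prod_mul_distrib, prod_ite, prod_const_one, one_mul, prod_const, finsetProd_rpow _ _
          (fun _ _ => by positivity)]
        congr
        exact_mod_cast (prod_primeFactors_pow_factorization hn).symm
    _ ≤ K ^ B * (n : ℝ) ^ δ := by gcongr

end Nat

lemma Int.card_Icc_ceil_floor_le {a b : ℝ} (hab : a ≤ b) : (#(Icc ⌈a⌉ ⌊b⌋) : ℝ) ≤ b - a + 1 := by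
  have hle : ⌈a⌉ ≤ ⌊b⌋ + 1 := Int.lt_add_one_iff.1 <| by
    have : (⌈a⌉ : ℝ) < ⌊b⌋ + 1 + 1 := by linarith [Int.ceil_lt_add_one a, Int.lt_floor_add_one b]
    exact_mod_cast this
  have hcard : (#(Icc ⌈a⌉ ⌊b⌋) : ℤ) = ⌊b⌋ + 1 - ⌈a⌉ := Int.card_Icc_of_le _ _ hle
  have : (#(Icc ⌈a⌉ ⌊b⌋) : ℝ) = (⌊b⌋ : ℝ) + 1 - ⌈a⌉ := by exact_mod_cast hcard
  linarith [Int.floor_le b, Int.le_ceil a]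

lemma Finset.cast_card_le_card_mul_of_mapsTo {α β : Type*} [DecidableEq β] {f : α → β}
    {s : Finset α} {t : Finset β} (hf : ∀ a ∈ s, f a ∈ t) {r : ℝ}
    (hr : ∀ b ∈ t, (#{a ∈ s | f a = b} : ℝ) ≤ r) : (#s : ℝ) ≤ #t * r := by
  rw [card_eq_sum_card_fiberwise hf]
  push_cast
  exact (sum_le_sum hr).trans_eq (by rw [sum_const, nsmul_eq_mul])

lemma Finset.cast_card_filter_product_le {α β : Type*} [DecidableEq α] {s : Finset α}
    {t : Finset β} (P : α × β → Prop) [DecidablePred P] {r : ℝ}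
    (h : ∀ a ∈ s, (#{b ∈ t | P (a, b)} : ℝ) ≤ r) : (#{x ∈ s ×ˢ t | P x} : ℝ) ≤ #s * r := by
  refine cast_card_le_card_mul_of_mapsTo (f := Prod.fst)
    (fun x hx => (mem_product.1 (mem_filter.1 hx).1).1) fun a ha => le_trans ?_ (h a ha)
  refine Nat.cast_le.2 (card_le_card_of_injOn Prod.snd (fun x hx => ?_) fun x hx y hy hxy => ?_)
  · obtain ⟨⟨hxst, hPx⟩, rfl⟩ := mem_filter.1 hx |>.imp_left mem_filter.1
    exact mem_filter.2 ⟨(mem_product.1 hxst).2, hPx⟩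
  · exact Prod.ext ((mem_filter.1 hx).2.trans (mem_filter.1 hy).2.symm) hxy

def sqSub (p : ℤ × ℤ) : ℤ := p.1 ^ 2 - p.2 ^ 2

lemma card_le_card_divisors_of_sqSub_eq {s : Finset (ℤ × ℤ)} {m : ℤ} (hm : m ≠ 0)
    (hs : ∀ p ∈ s, 0 < p.1 + p.2 ∧ sqSub p = m) : #s ≤ #m.natAbs.divisors := by
  refine card_le_card_of_injOn (fun p => (p.1 + p.2).natAbs) (fun p hp => ?_)
    fun p hp q hq hpq => ?_
  · obtain ⟨-, hpm⟩ := hs p hp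
    exact Nat.mem_divisors.2 ⟨Int.natAbs_dvd_natAbs.2 ⟨p.1 - p.2, by rw [← hpm, sqSub]; ring⟩,
      Int.natAbs_ne_zero.2 hm⟩
  · obtain ⟨hp₀, hpm⟩ := hs p hp
    obtain ⟨hq₀, hqm⟩ := hs q hq
    have hsum : p.1 + p.2 = q.1 + q.2 := by simp only at hpq; omega
    have hdiff : p.1 - p.2 = q.1 - q.2 := mul_right_cancel₀ hp₀.ne' (by
      simp only [sqSub] at hpm hqm
      linear_combination hpm - hqm - (q.1 - q.2) * hsum)
    exact Prod.ext (by omega) (by omega)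

section PositiveIntegers

variable {I : Finset ℤ} {B : ℝ}

theorem card_filter_ne_abs_add_mul_sqSub_le (hI : ∀ n ∈ I, 0 < n) (hB₀ : 0 ≤ B)
    (hB : ∀ p ∈ I ×ˢ I, (#(sqSub p).natAbs.divisors : ℝ) ≤ B) (t : ℝ) {a H : ℝ} (ha : a ≠ 0)
    (hH : 0 ≤ H) :
    (#{p ∈ I ×ˢ I | p.1 ≠ p.2 ∧ |t + a * sqSub p| ≤ H} : ℝ) ≤ (2 * (H / |a|) + 1) * B := by
  set c := -t / a
  set R := H / |a|
  have hR : 0 ≤ R := by positivity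
  have hwindow : ∀ p ∈ {p ∈ I ×ˢ I | p.1 ≠ p.2 ∧ |t + a * sqSub p| ≤ H},
      sqSub p ∈ Icc ⌈c - R⌉ ⌊c + R⌋ := by
    intro p hp
    have hdist : |(sqSub p : ℝ) - c| ≤ R := by
      have hscale : |(sqSub p : ℝ) - c| * |a| = |t + a * sqSub p| := by
        rw [← abs_mul, sub_mul, div_mul_cancel₀ _ ha]
        ring_nf
      rw [le_div_iff₀ (abs_pos.2 ha), hscale]
      exact (mem_filter.1 hp).2.2
    rw [abs_le] at hdist
    exact mem_Icc.2 ⟨Int.ceil_le.2 (by linarith), Int.le_floor.2 (by linarith)⟩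
  calc _ ≤ #(Icc ⌈c - R⌉ ⌊c + R⌋) * B := cast_card_le_card_mul_of_mapsTo hwindow fun m _ => ?_
    _ ≤ (c + R - (c - R) + 1) * B := by gcongr; exact Int.card_Icc_ceil_floor_le (by linarith)
    _ = _ := by ring
  rcases Finset.eq_empty_or_nonempty {p ∈ {p ∈ I ×ˢ I | p.1 ≠ p.2 ∧ |t + a * sqSub p| ≤ H} |
      sqSub p = m} with hempty | ⟨p₀, hp₀⟩
  · simpa [hempty] using hB₀
  obtain ⟨⟨hp₀I, hp₀ne, -⟩, rfl⟩ := mem_filter.1 hp₀ |>.imp_left mem_filter.1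
  have hpos : ∀ p ∈ I ×ˢ I, 0 < p.1 + p.2 := fun p hp =>
    add_pos (hI _ (mem_product.1 hp).1) (hI _ (mem_product.1 hp).2)
  have hm : sqSub p₀ ≠ 0 := by
    rw [show sqSub p₀ = (p₀.1 - p₀.2) * (p₀.1 + p₀.2) by rw [sqSub]; ring]
    exact mul_ne_zero (sub_ne_zero.2 hp₀ne) (hpos p₀ hp₀I).ne'
  refine (Nat.cast_le.2 (card_le_card_divisors_of_sqSub_eq hm fun p hp => ?_)).trans (hB p₀ hp₀I)
  obtain ⟨⟨hpI, -⟩, hpm⟩ := mem_filter.1 hp |>.imp_left mem_filter.1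
  exact ⟨hpos p hpI, hpm⟩

theorem card_filter_abs_add_sqSub_le (hI : ∀ n ∈ I, 0 < n) (hB₀ : 0 ≤ B)
    (hB : ∀ p ∈ I ×ˢ I, (#(sqSub p).natAbs.divisors : ℝ) ≤ B) {a₁ a₂ : ℤ} (ha₁ : a₁ ≠ 0)
    (ha₂ : a₂ ≠ 0) {H : ℝ} (hH : 0 ≤ H) :
    (#{x ∈ (I ×ˢ I) ×ˢ (I ×ˢ I) | |(a₁ : ℝ) * sqSub x.1 + a₂ * sqSub x.2| ≤ H} : ℝ) ≤
      #I * (#I + (2 * (H / |(a₁ : ℝ)|) + 1) * B) + #I ^ 2 * ((2 * (H / |(a₂ : ℝ)|) + 1) * B) := by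
  set D := {p ∈ I ×ˢ I | |0 + (a₁ : ℝ) * sqSub p| ≤ H}
  have hD : (#D : ℝ) ≤ #I + (2 * (H / |(a₁ : ℝ)|) + 1) * B := by
    rw [← card_filter_add_card_filter_not (s := D) (fun p => p.1 = p.2), Nat.cast_add]
    gcongr
    · refine Nat.cast_le.2 ((card_le_card fun p hp => ?_).trans_eq I.diag_card)
      obtain ⟨⟨hpI, -⟩, hpp⟩ := mem_filter.1 hp |>.imp_left mem_filter.1
      exact mem_diag.2 ⟨(mem_product.1 hpI).1, hpp⟩
    · rw [filter_filter]
      simpa only [and_comm] using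
        card_filter_ne_abs_add_mul_sqSub_le hI hB₀ hB 0 (Int.cast_ne_zero.2 ha₁) hH
  have hsplit : {x ∈ (I ×ˢ I) ×ˢ (I ×ˢ I) | |(a₁ : ℝ) * sqSub x.1 + a₂ * sqSub x.2| ≤ H} ⊆
      D ×ˢ I.diag ∪ {x ∈ (I ×ˢ I) ×ˢ (I ×ˢ I) |
        x.2.1 ≠ x.2.2 ∧ |(a₁ : ℝ) * sqSub x.1 + a₂ * sqSub x.2| ≤ H} := by
    intro x hx
    obtain ⟨hxI, hxH⟩ := mem_filter.1 hx
    by_cases hdiag : x.2.1 = x.2.2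
    · refine mem_union_left _ (mem_product.2 ⟨mem_filter.2 ⟨(mem_product.1 hxI).1, ?_⟩,
        mem_diag.2 ⟨(mem_product.1 (mem_product.1 hxI).2).1, hdiag⟩⟩)
      simpa [sqSub, hdiag] using hxH
    · exact mem_union_right _ (mem_filter.2 ⟨hxI, hdiag, hxH⟩)
  have hoff : (#{x ∈ (I ×ˢ I) ×ˢ (I ×ˢ I) |
        x.2.1 ≠ x.2.2 ∧ |(a₁ : ℝ) * sqSub x.1 + a₂ * sqSub x.2| ≤ H} : ℝ) ≤
      #I ^ 2 * ((2 * (H / |(a₂ : ℝ)|) + 1) * B) := by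
    rw [sq, ← Nat.cast_mul, ← card_product]
    exact cast_card_filter_product_le _ fun p _ => card_filter_ne_abs_add_mul_sqSub_le hI hB₀ hB
      ((a₁ : ℝ) * sqSub p) (Int.cast_ne_zero.2 ha₂) hH
  calc _ ≤ (#(D ×ˢ I.diag) : ℝ) + #{x ∈ (I ×ˢ I) ×ˢ (I ×ˢ I) |
        x.2.1 ≠ x.2.2 ∧ |(a₁ : ℝ) * sqSub x.1 + a₂ * sqSub x.2| ≤ H} := by
        exact_mod_cast (card_le_card hsplit).trans (card_union_le _ _)
    _ ≤ #I * #D + #I ^ 2 * ((2 * (H / |(a₂ : ℝ)|) + 1) * B) := by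
      rw [card_product, diag_card, Nat.cast_mul, mul_comm]
      gcongr
    _ ≤ _ := by gcongr

end PositiveIntegers

noncomputable def dyadicBlock (M : ℝ) : Finset ℤ := Icc ⌈M⌉ ⌊2 * M⌋

lemma mem_dyadicBlock {M : ℝ} {n : ℤ} : n ∈ dyadicBlock M ↔ M ≤ n ∧ (n : ℝ) ≤ 2 * M := by
  rw [dyadicBlock, mem_Icc, Int.ceil_le, Int.le_floor]

lemma NcountPairSq_le_card (a₁ a₂ : ℤ) (M H : ℝ) :
    NcountPairSq a₁ a₂ M H ≤ #{x ∈ (dyadicBlock M ×ˢ dyadicBlock M) ×ˢ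
      (dyadicBlock M ×ˢ dyadicBlock M) | |(a₁ : ℝ) * sqSub x.1 + a₂ * sqSub x.2| ≤ H} := by
  rw [NcountPairSq, ← Set.ncard_coe_finset]
  refine Set.ncard_le_ncard_of_injOn (fun x => ((x 0, x 1), (x 2, x 3))) (fun x ⟨hxM, hxH⟩ => ?_)
    (fun x _ y _ hxy => ?_) (finite_toSet _)
  · refine mem_coe.2 (mem_filter.2 ⟨?_, ?_⟩)
    · simp only [mem_product, mem_dyadicBlock]
      exact ⟨⟨hxM 0, hxM 1⟩, hxM 2, hxM 3⟩
    · simpa only [sqSub, Int.cast_sub, Int.cast_pow] using hxH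
  · simp only [Prod.mk.injEq] at hxy
    funext i
    fin_cases i <;> simp [hxy]

lemma cast_card_dyadicBlock_le {M : ℝ} (hM : 0 ≤ M) : (#(dyadicBlock M) : ℝ) ≤ M + 1 := by
  have := Int.card_Icc_ceil_floor_le (a := M) (b := 2 * M) (by linarith)
  rw [dyadicBlock]
  linarith

lemma card_divisors_natAbs_sqSub_le {δ C M : ℝ} (hδ : 0 ≤ δ) (hC₀ : 0 ≤ C)
    (hC : ∀ n : ℕ, (#n.divisors : ℝ) ≤ C * (n : ℝ) ^ δ) (hM : 0 ≤ M) {p : ℤ × ℤ}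
    (hp : p ∈ dyadicBlock M ×ˢ dyadicBlock M) :
    (#(sqSub p).natAbs.divisors : ℝ) ≤ C * (2 * M) ^ (2 * δ) := by
  obtain ⟨⟨h₁, h₁'⟩, ⟨h₂, h₂'⟩⟩ := And.imp mem_dyadicBlock.1 mem_dyadicBlock.1 (mem_product.1 hp)
  have hsize : ((sqSub p).natAbs : ℝ) ≤ (2 * M) ^ 2 := by
    rw [Nat.cast_natAbs, Int.cast_abs, sqSub, abs_le]
    push_cast
    constructor <;> nlinarith
  calc _ ≤ C * ((sqSub p).natAbs : ℝ) ^ δ := hC _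
    _ ≤ C * ((2 * M) ^ 2) ^ δ := by gcongr
    _ = C * (2 * M) ^ (2 * δ) := by rw [← rpow_natCast_mul (by positivity)]; norm_num

/-- Lemma 2b for `d = 2`: for `0 < |a₁| ≤ |a₂|`,
`N_{(a₁,−a₁,a₂,−a₂)}(M,H) ≪_ε M^ε(M²H/|a₂| + MH/|a₁| + M²)`. -/
theorem NcountPairSq_bound :
    ∀ ε > (0 : ℝ), ∃ C > (0 : ℝ), ∀ a₁ a₂ : ℤ, a₁ ≠ 0 → |a₁| ≤ |a₂| →
      ∀ M H : ℝ, 1 ≤ M → 1 ≤ H →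
      (NcountPairSq a₁ a₂ M H : ℝ)
        ≤ C * M ^ ε *
          (M ^ 2 * H / |(a₂ : ℝ)| + M * H / |(a₁ : ℝ)| + M ^ 2) := by
  intro ε hε
  obtain ⟨C, hC₁, hC⟩ := Nat.exists_card_divisors_le_mul_rpow (half_pos hε)
  refine ⟨10 * (C * 2 ^ ε), by positivity, fun a₁ a₂ ha₁ ha₁₂ M H hM hH => ?_⟩
  have ha₂ : a₂ ≠ 0 := abs_pos.1 ((abs_pos.2 ha₁).trans_le ha₁₂)
  set I := dyadicBlock M
  set B := C * 2 ^ ε * M ^ ε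
  have hIpos : ∀ n ∈ I, 0 < n := fun n hn =>
    Int.cast_pos.1 (by linarith [(mem_dyadicBlock.1 hn).1] : (0 : ℝ) < n)
  have hB : ∀ p ∈ I ×ˢ I, (#(sqSub p).natAbs.divisors : ℝ) ≤ B := fun p hp => by
    have := card_divisors_natAbs_sqSub_le (half_pos hε).le (by linarith) hC (by linarith) hp
    rwa [mul_div_cancel₀ _ two_ne_zero, mul_rpow zero_le_two (by linarith), ← mul_assoc] at this
  have hI : (#I : ℝ) ≤ 2 * M := by linarith [cast_card_dyadicBlock_le (M := M) (by linarith)]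
  have hB₁ : 1 ≤ B := one_le_mul_of_one_le_of_one_le
    (one_le_mul_of_one_le_of_one_le hC₁ (one_le_rpow one_le_two hε.le)) (one_le_rpow hM hε.le)
  calc (NcountPairSq a₁ a₂ M H : ℝ)
      ≤ #I * (#I + (2 * (H / |(a₁ : ℝ)|) + 1) * B) + #I ^ 2 * ((2 * (H / |(a₂ : ℝ)|) + 1) * B) :=
        (Nat.cast_le.2 (NcountPairSq_le_card a₁ a₂ M H)).trans <|
          card_filter_abs_add_sqSub_le hIpos (by linarith) hB ha₁ ha₂ (by linarith)
    _ ≤ 2 * M * (2 * M + (2 * (H / |(a₁ : ℝ)|) + 1) * B) +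
          (2 * M) ^ 2 * ((2 * (H / |(a₂ : ℝ)|) + 1) * B) := by
        gcongr
    _ ≤ 10 * B * (M ^ 2 * (H / |(a₂ : ℝ)|) + M * (H / |(a₁ : ℝ)|) + M ^ 2) := by
        have hu : 0 ≤ M * B * (H / |(a₁ : ℝ)|) := by positivity
        have hv : 0 ≤ M ^ 2 * B * (H / |(a₂ : ℝ)|) := by positivity
        nlinarith [mul_le_mul_of_nonneg_left hB₁ (sq_nonneg M),
          mul_le_mul_of_nonneg_left hM (by positivity : 0 ≤ M * B)]
    _ = _ := by simp only [B, mul_div_assoc]; ring
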